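/- arXiv:1711.09788 — 2 statements merged into one kernel-verified Lean document; each statement's English description precedes it below -/
import Mathlib

section
/- Let G be a connected simple graph with degree sequence 1 < d₁ ≤ d₂ ≤ … ≤ dₙ, and let t(G) be the number of spanning trees of G. Then t(G) ≤ (∏ᵢ dᵢ)/(n−1). -/
/-!
Root a spanning tree `T` of `G` at one of its edges `ab`: every vertex `v ≠ a` points to its
neighbour on the path from `v` to `a`, and `a` points to `b`. This parent map chooses a
`G`-neighbour of every vertex, and it determines `T`, whose edges are exactly the pairs
`{v, parent v}`, as well as the edge `ab`, the only pair of vertices that are each other's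
parent (every other parent step shortens the path to `a`). So the `t(G) (n - 1)` pairs of a
spanning tree and one of its edges inject into the `∏ᵥ dᵥ` ways of choosing a neighbour of each
vertex.
-/

open SimpleGraph Walk

lemma Sym2.mk_out {α : Type*} (e : Sym2 α) : s(e.out.1, e.out.2) = e :=
  e.out_eq

lemma SimpleGraph.adj_out_of_mem_edgeSet {V : Type*} {G : SimpleGraph V} {e : Sym2 V}
    (he : e ∈ G.edgeSet) : G.Adj e.out.1 e.out.2 := by
  rwa [← mem_edgeSet, Sym2.mk_out]

namespace SimpleGraph.IsTree

variable {V : Type*} {T : SimpleGraph V}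

noncomputable def path (hT : T.IsTree) (u v : V) : T.Walk u v :=
  (hT.existsUnique_path u v).choose

lemma isPath_path (hT : T.IsTree) (u v : V) : (hT.path u v).IsPath :=
  (hT.existsUnique_path u v).choose_spec.1

lemma eq_path (hT : T.IsTree) {u v : V} {p : T.Walk u v} (hp : p.IsPath) : p = hT.path u v :=
  (hT.existsUnique_path u v).choose_spec.2 p hp

open Classical in
noncomputable def parent (hT : T.IsTree) (a b v : V) : V :=
  if v = a then b else (hT.path v a).snd

variable (hT : T.IsTree) {a b : V}

lemma parent_root : hT.parent a b a = b :=
  if_pos rfl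

lemma parent_of_ne {v : V} (hv : v ≠ a) : hT.parent a b v = (hT.path v a).snd :=
  if_neg hv

lemma adj_parent (hab : T.Adj a b) (v : V) : T.Adj v (hT.parent a b v) := by
  by_cases hv : v = a
  · rwa [hv, parent_root]
  · rw [hT.parent_of_ne hv]
    exact adj_snd (not_nil_of_ne hv)

lemma parent_eq_root_of_adj {v : V} (hv : T.Adj v a) : hT.parent a b v = a := by
  rw [hT.parent_of_ne hv.ne]
  exact (hT.isAcyclic.eq_snd_of_adj_start (hT.isPath_path v a) hv (end_mem_support _)).symm

lemma parent_eq_or_parent_eq {x y : V} (hxy : T.Adj x y) :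
    hT.parent a b x = y ∨ hT.parent a b y = x := by
  by_cases hx : x = a
  · exact .inr (hx ▸ hT.parent_eq_root_of_adj (hx ▸ hxy.symm))
  by_cases hy : y = a
  · exact .inl (hy ▸ hT.parent_eq_root_of_adj (hy ▸ hxy))
  rw [hT.parent_of_ne hx, hT.parent_of_ne hy]
  by_cases hmem : y ∈ (hT.path x a).support
  · exact .inl (hT.isAcyclic.eq_snd_of_adj_start (hT.isPath_path x a) hxy hmem).symm
  · right
    rw [← hT.eq_path ((hT.isPath_path x a).cons (h := hxy.symm) hmem)]
    exact snd_cons _ _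

lemma edgeSet_eq_range_parent (hab : T.Adj a b) :
    T.edgeSet = Set.range fun v ↦ s(v, hT.parent a b v) := by
  ext e
  refine Sym2.ind (fun x y ↦ ?_) e
  refine ⟨fun hxy ↦ ?_, fun ⟨v, hv⟩ ↦ hv ▸ hT.adj_parent hab v⟩
  rcases hT.parent_eq_or_parent_eq (a := a) (b := b) (x := x) (y := y) hxy with h | h
  · exact ⟨x, by beta_reduce; rw [h]⟩
  · exact ⟨y, by beta_reduce; rw [h, Sym2.eq_swap]⟩

lemma length_path_parent_add_one {v : V} (hv : v ≠ a) :
    (hT.path (hT.parent a b v) a).length + 1 = (hT.path v a).length := by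
  rw [hT.parent_of_ne hv, ← hT.eq_path (hT.isPath_path v a).tail]
  exact length_tail_add_one (not_nil_of_ne hv)

lemma eq_of_parent_eq_of_parent_eq {u w : V} (hu : hT.parent a b u = w)
    (hw : hT.parent a b w = u) : s(u, w) = s(a, b) := by
  by_cases hua : u = a
  · rw [hua, ← hu, hua, parent_root]
  by_cases hwa : w = a
  · rw [hwa, ← hw, hwa, parent_root, Sym2.eq_swap]
  have hu' := hT.length_path_parent_add_one (b := b) hua
  have hw' := hT.length_path_parent_add_one (b := b) hwa
  rw [hu] at hu'
  rw [hw] at hw'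
  omega

lemma eq_and_eq_of_parent_eq {T' : SimpleGraph V} (hT' : T'.IsTree) {a' b' : V}
    (hab : T.Adj a b) (hab' : T'.Adj a' b') (h : hT.parent a b = hT'.parent a' b') :
    T = T' ∧ s(a, b) = s(a', b') := by
  refine ⟨edgeSet_injective ?_, hT'.eq_of_parent_eq_of_parent_eq ?_ ?_⟩
  · rw [hT.edgeSet_eq_range_parent hab, hT'.edgeSet_eq_range_parent hab', h]
  · rw [← h, parent_root]
  · rw [← h, hT.parent_eq_root_of_adj hab.symm]

end SimpleGraph.IsTree

section Counting

variable {V : Type*} [Fintype V]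

lemma card_sigma_edgeSet_of_isTree (P : SimpleGraph V → Prop) :
    Nat.card (Σ H : {H : SimpleGraph V // P H ∧ H.IsTree}, H.1.edgeSet)
      = Nat.card {H : SimpleGraph V // P H ∧ H.IsTree} * (Fintype.card V - 1) := by
  classical
  have hedges (H : {H : SimpleGraph V // P H ∧ H.IsTree}) :
      Nat.card H.1.edgeSet = Fintype.card V - 1 := by
    have := (isTree_iff_connected_and_card.mp H.2.2).2
    rw [Nat.card_eq_fintype_card (α := V)] at this
    omega
  rw [Nat.card_sigma]
  simp only [hedges, Finset.sum_const, smul_eq_mul, Finset.card_univ,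
    Nat.card_eq_fintype_card]

lemma card_sigma_edgeSet_le_prod_degree (G : SimpleGraph V) [DecidableRel G.Adj] :
    Nat.card (Σ H : {H : SimpleGraph V // H ≤ G ∧ H.IsTree}, H.1.edgeSet)
      ≤ ∏ v, G.degree v := by
  let encode : (Σ H : {H : SimpleGraph V // H ≤ G ∧ H.IsTree}, H.1.edgeSet) →
      ∀ v, G.neighborSet v := fun ⟨⟨_, hHG, hH⟩, ⟨e, he⟩⟩ v ↦
    ⟨hH.parent e.out.1 e.out.2 v, hHG (hH.adj_parent (adj_out_of_mem_edgeSet he) v)⟩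
  have hencode : Function.Injective encode := by
    rintro ⟨⟨H, _, hH⟩, ⟨e, he⟩⟩ ⟨⟨H', _, hH'⟩, ⟨e', he'⟩⟩ h
    have hparent : hH.parent e.out.1 e.out.2 = hH'.parent e'.out.1 e'.out.2 :=
      funext fun v ↦ congrArg Subtype.val (congrFun h v)
    obtain ⟨rfl, hee'⟩ := hH.eq_and_eq_of_parent_eq hH' (adj_out_of_mem_edgeSet he)
      (adj_out_of_mem_edgeSet he') hparent
    rw [Sym2.mk_out, Sym2.mk_out] at hee'
    subst hee'
    rfl
  calc _ ≤ Nat.card (∀ v, G.neighborSet v) := Nat.card_le_card_of_injective encode hencode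
    _ = ∏ v, G.degree v := by
      simp only [Nat.card_pi, Nat.card_eq_fintype_card, card_neighborSet_eq_degree]

end Counting

theorem stmt_9_general {V : Type*} [Fintype V] (G : SimpleGraph V) [DecidableRel G.Adj] :
    Nat.card {H : SimpleGraph V // H ≤ G ∧ H.IsTree} * (Fintype.card V - 1)
      ≤ ∏ v, G.degree v := by
  rw [← card_sigma_edgeSet_of_isTree]
  exact card_sigma_edgeSet_le_prod_degree G

/-- Kostochka's upper bound: for a connected simple graph with all degrees `> 1`,
the number of spanning trees satisfies `t(G) ≤ (∏ᵢ dᵢ)/(n−1)`. -/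
theorem stmt_9 {V : Type*} [Fintype V] (G : SimpleGraph V) [DecidableRel G.Adj]
    (hconn : G.Connected) (hmin : ∀ v, 1 < G.degree v) :
    Nat.card {H : SimpleGraph V // H ≤ G ∧ H.IsTree} * (Fintype.card V - 1)
      ≤ ∏ v, G.degree v :=
  stmt_9_general G
end

section
/- Let G be a finite connected loopless multigraph, let u ≠ v be vertices, and let R_eff(u ↔ v) be the effective resistance between u and v. If at most f parallel edges join u to v, then R_eff(u ↔ v)^{-1} ≤ f + deg(u)·deg(v)/(deg(u) + deg(v)). -/
open Finset

/-- The Dirichlet energy of `h` in the multigraph with edge multiplicities `E`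
(each undirected edge counted once). -/
noncomputable def energy {V : Type*} [Fintype V] (E : V → V → ℕ) (h : V → ℝ) : ℝ :=
  (1 / 2) * ∑ x, ∑ y, (E x y : ℝ) * (h x - h y) ^ 2

/-- The reciprocal of the effective resistance between `u` and `v`, via the discrete
Dirichlet principle: `R_eff(u ↔ v)⁻¹ = inf { energy h : h u = 0, h v = 1 }`. -/
noncomputable def effResistInv {V : Type*} [Fintype V] (E : V → V → ℕ) (u v : V) : ℝ :=
  sInf {r : ℝ | ∃ h : V → ℝ, h u = 0 ∧ h v = 1 ∧ r = energy E h}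

lemma sum_pair_support {V : Type*} [Fintype V] [DecidableEq V] {u v : V} (huv : u ≠ v)
    (p : V → ℝ) (hp : ∀ x, x ≠ u → x ≠ v → p x = 0) : ∑ x, p x = p u + p v := by
  rw [← Finset.sum_pair huv]
  refine (Finset.sum_subset (Finset.subset_univ _) ?_).symm
  intro x _ hx
  simp only [Finset.mem_insert, Finset.mem_singleton, not_or] at hx
  exact hp x hx.1 hx.2

lemma double_sum_eq {V : Type*} [Fintype V] [DecidableEq V] (E : V → V → ℕ)
    (hsym : ∀ x y, E x y = E y x) (hloop : ∀ x, E x x = 0)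
    {u v : V} (huv : u ≠ v) (g : V → ℝ) (hg : ∀ x, x ≠ u → x ≠ v → g x = 0) :
    ∑ x, ∑ y, (E x y : ℝ) * (g x - g y) ^ 2
      = 2 * (g u ^ 2 * ∑ y, (E u y : ℝ)) + 2 * (g v ^ 2 * ∑ y, (E v y : ℝ))
        - 4 * (E u v : ℝ) * g u * g v := by
  have inner : ∀ x, ∑ y, (E x y : ℝ) * (g x - g y) ^ 2
      = g x ^ 2 * (∑ y, (E x y : ℝ)) - 2 * g x * ((E x u : ℝ) * g u + (E x v : ℝ) * g v)
        + ((E x u : ℝ) * g u ^ 2 + (E x v : ℝ) * g v ^ 2) := by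
    intro x
    have h1 : ∑ y, (E x y : ℝ) * g y = (E x u : ℝ) * g u + (E x v : ℝ) * g v :=
      sum_pair_support huv _ (fun y hy1 hy2 => by rw [hg y hy1 hy2, mul_zero])
    have h2 : ∑ y, (E x y : ℝ) * g y ^ 2 = (E x u : ℝ) * g u ^ 2 + (E x v : ℝ) * g v ^ 2 :=
      sum_pair_support huv _ (fun y hy1 hy2 => by rw [hg y hy1 hy2]; ring)
    have expand : ∀ y, (E x y : ℝ) * (g x - g y) ^ 2
        = g x ^ 2 * (E x y : ℝ) - 2 * g x * ((E x y : ℝ) * g y) + (E x y : ℝ) * g y ^ 2 := by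
      intro y; ring
    rw [Finset.sum_congr rfl (fun y _ => expand y)]
    rw [Finset.sum_add_distrib, Finset.sum_sub_distrib, ← Finset.mul_sum, ← Finset.mul_sum,
      h1, h2]
  rw [Finset.sum_congr rfl (fun x _ => inner x)]
  rw [Finset.sum_add_distrib, Finset.sum_sub_distrib]
  have hA : ∑ x, g x ^ 2 * (∑ y, (E x y : ℝ))
      = g u ^ 2 * (∑ y, (E u y : ℝ)) + g v ^ 2 * (∑ y, (E v y : ℝ)) :=
    sum_pair_support huv _ (fun x hx1 hx2 => by rw [hg x hx1 hx2]; ring)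
  have hB : ∑ x, 2 * g x * ((E x u : ℝ) * g u + (E x v : ℝ) * g v)
      = 4 * (E u v : ℝ) * g u * g v := by
    rw [sum_pair_support huv _ (fun x hx1 hx2 => by rw [hg x hx1 hx2]; ring)]
    rw [hloop u, hloop v, hsym v u]
    push_cast
    ring
  have hC : ∑ x, ((E x u : ℝ) * g u ^ 2 + (E x v : ℝ) * g v ^ 2)
      = g u ^ 2 * (∑ y, (E u y : ℝ)) + g v ^ 2 * (∑ y, (E v y : ℝ)) := by
    rw [Finset.sum_add_distrib, ← Finset.sum_mul, ← Finset.sum_mul]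
    have e1 : ∑ x, (E x u : ℝ) = ∑ y, (E u y : ℝ) :=
      Finset.sum_congr rfl fun x _ => by rw [hsym]
    have e2 : ∑ x, (E x v : ℝ) = ∑ y, (E v y : ℝ) :=
      Finset.sum_congr rfl fun x _ => by rw [hsym]
    rw [e1, e2]; ring
  rw [hA, hB, hC]; ring

/-- If at most `f` parallel edges join `u` to `v`, then
`R_eff(u ↔ v)⁻¹ ≤ f + deg(u)·deg(v)/(deg(u)+deg(v))`. -/
theorem stmt_11 {V : Type*} [Fintype V] (E : V → V → ℕ)
    (hsym : ∀ x y, E x y = E y x) (hloop : ∀ x, E x x = 0)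
    (hconn : (SimpleGraph.fromRel (fun x y => 0 < E x y)).Connected)
    (u v : V) (huv : u ≠ v) (f : ℕ) (hpar : E u v ≤ f) :
    effResistInv E u v
      ≤ (f : ℝ) + ((∑ y, E u y : ℕ) : ℝ) * ((∑ y, E v y : ℕ) : ℝ)
          / (((∑ y, E u y : ℕ) : ℝ) + ((∑ y, E v y : ℕ) : ℝ)) := by
  classical
  set a : ℝ := ((∑ y, E u y : ℕ) : ℝ) with ha_def
  set b : ℝ := ((∑ y, E v y : ℕ) : ℝ) with hb_def
  -- positivity of degrees from connectivity
  have hadj : ∀ w t : V, w ≠ t → ∃ y, 0 < E w y := by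
    intro w t hwt
    obtain ⟨p⟩ := hconn.preconnected w t
    cases p with
    | nil => exact absurd rfl hwt
    | cons hadj _ =>
      rw [SimpleGraph.fromRel_adj] at hadj
      rcases hadj.2 with h | h
      · exact ⟨_, h⟩
      · exact ⟨_, by rw [hsym]; exact h⟩
  have hdeg : ∀ w t : V, w ≠ t → (0:ℝ) < ((∑ y, E w y : ℕ) : ℝ) := by
    intro w t hwt
    obtain ⟨y, hy⟩ := hadj w t hwt
    have : 0 < ∑ y, E w y := Finset.sum_pos' (fun _ _ => Nat.zero_le _) ⟨y, Finset.mem_univ y, hy⟩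
    exact_mod_cast this
  have ha : (0:ℝ) < a := hdeg u v huv
  have hb : (0:ℝ) < b := hdeg v u huv.symm
  have hab : (0:ℝ) < a + b := by linarith
  set c : ℝ := b / (a + b) with hc_def
  set h : V → ℝ := fun x => if x = u then 0 else if x = v then 1 else c with hh_def
  have hhu : h u = 0 := by simp [hh_def]
  have hhv : h v = 1 := by simp [hh_def, huv.symm]
  -- the energy of h
  set g : V → ℝ := fun x => h x - c with hg_def
  have hg : ∀ x, x ≠ u → x ≠ v → g x = 0 := by
    intro x hx1 hx2; simp [hg_def, hh_def, hx1, hx2]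
  have hgu : g u = -c := by simp [hg_def, hhu]
  have hgv : g v = 1 - c := by simp [hg_def, hhv]
  have hEn : energy E h = c ^ 2 * a + (1 - c) ^ 2 * b + 2 * (E u v : ℝ) * c * (1 - c) := by
    have same : ∀ x y : V, (E x y : ℝ) * (h x - h y) ^ 2 = (E x y : ℝ) * (g x - g y) ^ 2 := by
      intro x y; simp only [hg_def]; ring
    rw [energy]
    rw [Finset.sum_congr rfl fun x _ => Finset.sum_congr rfl fun y _ => same x y]
    rw [double_sum_eq E hsym hloop huv g hg, hgu, hgv]
    have hacast : ∑ y, (E u y : ℝ) = a := by rw [ha_def]; push_cast; rfl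
    have hbcast : ∑ y, (E v y : ℝ) = b := by rw [hb_def]; push_cast; rfl
    rw [hacast, hbcast]; ring
  -- the bound on the energy
  have hbound : energy E h ≤ (f : ℝ) + a * b / (a + b) := by
    rw [hEn]
    have e1 : c ^ 2 * a + (1 - c) ^ 2 * b + 2 * (E u v : ℝ) * c * (1 - c)
        = a * b / (a + b) + (E u v : ℝ) * (2 * a * b / (a + b) ^ 2) := by
      rw [hc_def]; field_simp; ring
    rw [e1]
    have e2 : 2 * a * b / (a + b) ^ 2 ≤ 1 := by
      rw [div_le_one (by positivity)]; nlinarith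
    have e3 : (E u v : ℝ) * (2 * a * b / (a + b) ^ 2) ≤ (E u v : ℝ) * 1 := by
      apply mul_le_mul_of_nonneg_left e2 (by positivity)
    have e4 : (E u v : ℝ) ≤ (f : ℝ) := by exact_mod_cast hpar
    linarith
  refine le_trans ?_ hbound
  apply csInf_le
  · refine ⟨0, ?_⟩
    rintro r ⟨h', _, _, rfl⟩
    rw [energy]
    positivity
  · exact ⟨h, hhu, hhv, rfl⟩
end
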